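/- arXiv:2402.08840 — 3 statements merged into one kernel-verified Lean document; each statement's English description precedes it below -/
import Mathlib

section
/- Suppose ℚⁿ = X ⊕ Y is an internal direct sum of two linear subspaces, A is a finite set of p nonzero vectors contained in X, and B is a finite set of q nonzero vectors contained in Y. Then for every integer i with 0 ≤ i ≤ min(p, q), one has d_A(p − i) + d_B(i) = min over all S ∈ A_i(B) of dim span_ℚ(S). -/
/-!
Since `X ∩ Y = 0`, a set `S ∪ U` with `S ⊆ X` and `U ⊆ Y` spans a space of dimension
`dim span S + dim span U`. As `T` runs over the `i`-subsets of `A`, the complement `A \ T` runs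
over the `(p - i)`-subsets of `A`, so the minimum over `A_i(B)` splits into the independent
minima `d_A(p - i)` and `d_B(i)`.
-/

/-- The depth chart of a finite set `A` of vectors in `ℚⁿ`:
`d_A(k)` is the minimum of `dim span_ℚ(S)` over all `k`-element subsets `S` of `A`
when `0 ≤ k ≤ |A|`, and `0` otherwise. -/
noncomputable def depthChart {n : ℕ} (A : Finset (Fin n → ℚ)) (k : ℤ) : ℤ :=
  if h : 0 ≤ k ∧ k ≤ (A.card : ℤ) then
    (A.powersetCard k.toNat).inf'
      (Finset.powersetCard_nonempty.mpr (by omega))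
      (fun S => (Module.finrank ℚ (Submodule.span ℚ (S : Set (Fin n → ℚ))) : ℤ))
  else 0

open Finset Module Submodule

theorem Submodule.finrank_span_union_of_disjoint {K V : Type*} [DivisionRing K]
    [AddCommGroup V] [Module K V] [DecidableEq V] {X Y : Submodule K V} (hXY : Disjoint X Y)
    {S T : Finset V} (hS : (S : Set V) ⊆ X) (hT : (T : Set V) ⊆ Y) :
    finrank K (span K ((S ∪ T : Finset V) : Set V)) =
      finrank K (span K (S : Set V)) + finrank K (span K (T : Set V)) := by
  have hdisj : Disjoint (span K (S : Set V)) (span K (T : Set V)) :=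
    hXY.mono (span_le.mpr hS) (span_le.mpr hT)
  have := finrank_sup_add_finrank_inf_eq (span K (S : Set V)) (span K (T : Set V))
  rwa [hdisj.eq_bot, finrank_bot, add_zero, ← span_union, ← coe_union] at this

section depthChart

variable {n : ℕ}

theorem depthChart_le_finrank_span {A S : Finset (Fin n → ℚ)} (hS : S ⊆ A) :
    depthChart A S.card ≤ finrank ℚ (span ℚ (S : Set (Fin n → ℚ))) := by
  have hk : 0 ≤ (S.card : ℤ) ∧ (S.card : ℤ) ≤ A.card :=
    ⟨by omega, by exact_mod_cast card_le_card hS⟩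
  rw [depthChart, dif_pos hk]
  exact inf'_le _ (mem_powersetCard.mpr ⟨hS, by simp⟩)

theorem exists_subset_card_eq_depthChart_eq {A : Finset (Fin n → ℚ)} {k : ℕ} (hk : k ≤ A.card) :
    ∃ S ⊆ A, S.card = k ∧ depthChart A k = finrank ℚ (span ℚ (S : Set (Fin n → ℚ))) := by
  have hk' : 0 ≤ (k : ℤ) ∧ (k : ℤ) ≤ A.card := ⟨by omega, by exact_mod_cast hk⟩
  obtain ⟨S, hSmem, hSeq⟩ := exists_mem_eq_inf' (powersetCard_nonempty.mpr hk)
    (fun S : Finset (Fin n → ℚ) => (finrank ℚ (span ℚ (S : Set (Fin n → ℚ))) : ℤ))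
  obtain ⟨hSA, hScard⟩ := mem_powersetCard.mp hSmem
  refine ⟨S, hSA, hScard, ?_⟩
  rw [depthChart, dif_pos hk']
  simpa only [Int.toNat_natCast] using hSeq

end depthChart

theorem depthChart_replace_general {n p q : ℕ} {X Y : Submodule ℚ (Fin n → ℚ)}
    (hXY : IsCompl X Y)
    (A B : Finset (Fin n → ℚ))
    (hAX : (A : Set (Fin n → ℚ)) ⊆ (X : Set (Fin n → ℚ)))
    (hAcard : A.card = p)
    (hBY : (B : Set (Fin n → ℚ)) ⊆ (Y : Set (Fin n → ℚ)))
    (hBcard : B.card = q)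
    (i : ℕ) (hi : i ≤ min p q) :
    depthChart A ((p : ℤ) - (i : ℤ)) + depthChart B (i : ℤ) =
      sInf {d : ℤ | ∃ T U : Finset (Fin n → ℚ),
        T ⊆ A ∧ T.card = i ∧ U ⊆ B ∧ U.card = i ∧
        d = (Module.finrank ℚ
          (Submodule.span ℚ (((A \ T) ∪ U : Finset (Fin n → ℚ)) : Set (Fin n → ℚ))) : ℤ)} := by
  subst hAcard hBcard
  have hiA : i ≤ A.card := hi.trans (min_le_left _ _)
  have hiB : i ≤ B.card := hi.trans (min_le_right _ _)
  have hrank (T : Finset (Fin n → ℚ)) {U : Finset (Fin n → ℚ)} (hU : U ⊆ B) :=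
    finrank_span_union_of_disjoint hXY.disjoint
      ((coe_subset.mpr (sdiff_subset : A \ T ⊆ A)).trans hAX) ((coe_subset.mpr hU).trans hBY)
  refine (IsLeast.csInf_eq ⟨?_, ?_⟩).symm
  · obtain ⟨SA, hSA, hSAcard, hSAeq⟩ := exists_subset_card_eq_depthChart_eq (Nat.sub_le A.card i)
    obtain ⟨SB, hSB, hSBcard, hSBeq⟩ := exists_subset_card_eq_depthChart_eq hiB
    refine ⟨A \ SA, SB, sdiff_subset, by rw [card_sdiff_of_subset hSA]; omega, hSB, hSBcard, ?_⟩
    rw [hrank (A \ SA) hSB, Finset.sdiff_sdiff_eq_self hSA, ← Nat.cast_sub hiA, hSAeq, hSBeq]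
    norm_cast
  · rintro d ⟨T, U, hT, hTcard, hU, rfl, rfl⟩
    have hAT := depthChart_le_finrank_span (sdiff_subset : A \ T ⊆ A)
    rw [card_sdiff_of_subset hT, hTcard, Nat.cast_sub hiA] at hAT
    have hBU := depthChart_le_finrank_span hU
    rw [hrank T hU]
    push_cast
    omega

/-- If `ℚⁿ = X ⊕ Y`, `A` is a finite set of `p` nonzero vectors in `X`, and `B` is a
finite set of `q` nonzero vectors in `Y`, then for `0 ≤ i ≤ min p q`,
`d_A(p - i) + d_B(i)` equals the minimum of `dim span_ℚ(S)` over all sets `S` obtained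
from `A` by replacing exactly `i` of its elements by `i` pairwise distinct elements
of `B`. -/
theorem depthChart_replace {n p q : ℕ} {X Y : Submodule ℚ (Fin n → ℚ)}
    (hXY : IsCompl X Y)
    (A B : Finset (Fin n → ℚ))
    (hA0 : ∀ v ∈ A, v ≠ 0) (hAX : (A : Set (Fin n → ℚ)) ⊆ (X : Set (Fin n → ℚ)))
    (hAcard : A.card = p)
    (hB0 : ∀ v ∈ B, v ≠ 0) (hBY : (B : Set (Fin n → ℚ)) ⊆ (Y : Set (Fin n → ℚ)))
    (hBcard : B.card = q)
    (i : ℕ) (hi : i ≤ min p q) :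
    depthChart A ((p : ℤ) - (i : ℤ)) + depthChart B (i : ℤ) =
      sInf {d : ℤ | ∃ T U : Finset (Fin n → ℚ),
        T ⊆ A ∧ T.card = i ∧ U ⊆ B ∧ U.card = i ∧
        d = (Module.finrank ℚ
          (Submodule.span ℚ (((A \ T) ∪ U : Finset (Fin n → ℚ)) : Set (Fin n → ℚ))) : ℤ)} :=
  depthChart_replace_general hXY A B hAX hAcard hBY hBcard i hi
end

section
/- Let k ≥ 1 be an integer and let e_1, …, e_{3k} denote the standard basis of ℚ^{3k}. Let C ⊆ ℚ^{3k} be the set of 6k vectors consisting, for each β = 0, 1, …, k − 1, of the six vectors e_{3β+1}, e_{3β+2}, e_{3β+3}, e_{3β+1} − e_{3β+2}, e_{3β+2} − e_{3β+3}, e_{3β+1} − e_{3β+3}. Then the depth chart of C satisfies d_C(0) = 0, d_C(1) = 1, d_C(2) = 2, d_C(3) = 2, d_C(4) = 3, d_C(5) = 3, and d_C(6) = 3. -/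
/-- The `i`-th standard basis vector of `ℚⁿ` (indexed from `0`); equals `0` if `i ≥ n`. -/
def stdVec (n : ℕ) (i : ℕ) : Fin n → ℚ := fun j => if (j : ℕ) = i then 1 else 0

/-! The vectors of `C` fall into `k` blocks supported on disjoint sets of coordinates, each a copy
of the six vectors `e₁, e₂, e₃, e₁ - e₂, e₂ - e₃, e₁ - e₃` of `ℚ³`. Spans of vectors from
different blocks meet trivially, so ranks add over the blocks. Inside one block any two of the six
vectors are independent and any four span `ℚ³`, as nonvanishing `2 × 2` and `3 × 3` minors show.
Splitting a subset of `C` into its part in one block and the rest therefore gives rank at least `2`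
for two vectors and at least `3` for four. Subsets of a single block attain these bounds, the
triple `e₁, e₂, e₁ - e₂` having rank `2`. -/

open Finset Module Submodule

theorem linearIndependent_of_det_submatrix_ne_zero {K ι m : Type*} [Field K] [Fintype m]
    [DecidableEq m] {v : m → ι → K} (js : m → ι)
    (h : (Matrix.of fun i j => v i (js j)).det ≠ 0) : LinearIndependent K v :=
  LinearIndependent.of_comp (LinearMap.funLeft K K js)
    (Matrix.linearIndependent_rows_of_det_ne_zero h)

theorem Submodule.disjoint_pi_bot_compl {R ι : Type*} [Semiring R] (s : Set ι) :
    Disjoint (pi s fun _ => (⊥ : Submodule R R)) (pi sᶜ fun _ => ⊥) := by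
  rw [disjoint_def]
  intro v h₁ h₂
  funext i
  by_cases hi : i ∈ s
  · exact (mem_bot R).mp (mem_pi.mp h₁ i hi)
  · exact (mem_bot R).mp (mem_pi.mp h₂ i hi)

section FinrankSpan

variable {K V : Type*} [Field K] [AddCommGroup V] [Module K V]

theorem le_finrank_span_of_linearIndependent [FiniteDimensional K V] {m : ℕ} {v : Fin m → V}
    {s : Set V} (hv : LinearIndependent K v) (hs : Set.range v ⊆ s) :
    m ≤ finrank K (span K s) := by
  simpa [finrank_span_eq_card hv] using Submodule.finrank_mono (span_mono (R := K) hs)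

theorem one_le_finrank_span [FiniteDimensional K V] {v : V} {s : Set V} (hv : v ∈ s)
    (hv0 : v ≠ 0) : 1 ≤ finrank K (span K s) :=
  one_le_finrank_iff.mpr fun h => hv0 (span_eq_bot.mp h v hv)

theorem finrank_span_eq_add_of_disjoint_filter [DecidableEq V] (S : Finset V) (p : V → Prop)
    [DecidablePred p]
    (h : Disjoint (span K (S.filter p : Set V)) (span K (S.filter (¬p ·) : Set V))) :
    finrank K (span K (S : Set V)) =
      finrank K (span K (S.filter p : Set V)) + finrank K (span K (S.filter (¬p ·) : Set V)) := by
  rw [← Submodule.finrank_sup_add_finrank_inf_eq, h.eq_bot, finrank_bot, add_zero, ← span_union,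
    ← coe_union, filter_union_filter_not_eq]

theorem finrank_span_triple_sub_le_two (u v : V) :
    finrank K (span K ({u, v, u - v} : Set V)) ≤ 2 := by
  classical
  have hle : span K ({u, v, u - v} : Set V) ≤ span K (({u, v} : Finset V) : Set V) := by
    rw [coe_pair]
    have hu : u ∈ span K ({u, v} : Set V) := subset_span (by simp)
    have hv : v ∈ span K ({u, v} : Set V) := subset_span (by simp)
    simpa [span_le, Set.insert_subset_iff] using ⟨hu, hv, sub_mem hu hv⟩
  exact (Submodule.finrank_mono hle).trans ((finrank_span_finset_le_card _).trans card_le_two)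

end FinrankSpan

theorem depthChart_natCast_eq {n : ℕ} {A : Finset (Fin n → ℚ)} {m r : ℕ} (hm : m ≤ #A)
    (hle : ∃ S ⊆ A, #S = m ∧ finrank ℚ (span ℚ (S : Set (Fin n → ℚ))) ≤ r)
    (hge : ∀ S ⊆ A, #S = m → r ≤ finrank ℚ (span ℚ (S : Set (Fin n → ℚ)))) :
    depthChart A m = r := by
  rw [depthChart, dif_pos ⟨by omega, by omega⟩]
  simp only [Int.toNat_natCast]
  obtain ⟨S, hSA, hSm, hSr⟩ := hle
  refine le_antisymm ?_ (le_inf' _ _ fun S hS => ?_)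
  · exact (inf'_le _ (mem_powersetCard.mpr ⟨hSA, hSm⟩)).trans (by exact_mod_cast hSr)
  obtain ⟨hSA, hSm⟩ := mem_powersetCard.mp hS
  exact_mod_cast hge S hSA hSm

def rootCoeff : Fin 6 → Fin 3 → ℤ :=
  ![![1, 0, 0], ![0, 1, 0], ![0, 0, 1], ![1, -1, 0], ![0, 1, -1], ![1, 0, -1]]

theorem exists_rootCoeff_ne_zero : ∀ t, ∃ p, rootCoeff t p ≠ 0 := by decide

theorem exists_det_rootCoeff_pair_ne_zero : ∀ a b, a ≠ b → ∃ p q,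
    (Matrix.of fun i j => rootCoeff (![a, b] i) (![p, q] j)).det ≠ 0 := by
  simp only [Matrix.det_fin_two, Matrix.of_apply]
  decide

theorem exists_det_rootCoeff_triple_ne_zero : ∀ T : Finset (Fin 6), 4 ≤ #T →
    ∃ a ∈ T, ∃ b ∈ T, ∃ c ∈ T,
      (Matrix.of fun i j => rootCoeff (![a, b, c] i) j).det ≠ 0 := by
  simp only [Matrix.det_fin_three, Matrix.of_apply]
  decide

theorem rootCoeff_injective : Function.Injective rootCoeff := by
  unfold Function.Injective
  decide

def blockVec (n β : ℕ) (t : Fin 6) : Fin n → ℚ :=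
  ∑ s : Fin 3, (rootCoeff t s : ℚ) • stdVec n (3 * β + s)

theorem image_blockVec (n β : ℕ) : univ.image (blockVec n β) =
    {stdVec n (3 * β), stdVec n (3 * β + 1), stdVec n (3 * β + 2),
       stdVec n (3 * β) - stdVec n (3 * β + 1),
       stdVec n (3 * β + 1) - stdVec n (3 * β + 2),
       stdVec n (3 * β) - stdVec n (3 * β + 2)} := by
  simp [blockVec, rootCoeff, Fin.univ_succ, image_insert, sub_eq_add_neg]

section Block

variable {n β : ℕ}

def blockCoord (hβ : 3 * β + 2 < n) (s : Fin 3) : Fin n := ⟨3 * β + s, by omega⟩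

theorem blockVec_apply_blockCoord (hβ : 3 * β + 2 < n) (t : Fin 6) (s : Fin 3) :
    blockVec n β t (blockCoord hβ s) = rootCoeff t s := by
  simp [blockVec, blockCoord, stdVec, Fin.val_eq_val]

theorem blockVec_ne_zero (hβ : 3 * β + 2 < n) (t : Fin 6) : blockVec n β t ≠ 0 := by
  obtain ⟨p, hp⟩ := exists_rootCoeff_ne_zero t
  intro h
  have := blockVec_apply_blockCoord hβ t p
  rw [h, Pi.zero_apply] at this
  exact hp (by exact_mod_cast this.symm)

theorem blockVec_injective (hβ : 3 * β + 2 < n) : Function.Injective (blockVec n β) := by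
  intro t u h
  apply rootCoeff_injective
  funext s
  have := congrFun h (blockCoord hβ s)
  rwa [blockVec_apply_blockCoord, blockVec_apply_blockCoord, Int.cast_inj] at this

theorem linearIndependent_blockVec (hβ : 3 * β + 2 < n) {m : Type*} [Fintype m]
    [DecidableEq m] (ts : m → Fin 6) (ps : m → Fin 3)
    (h : (Matrix.of fun i j => rootCoeff (ts i) (ps j)).det ≠ 0) :
    LinearIndependent ℚ fun i => blockVec n β (ts i) := by
  refine linearIndependent_of_det_submatrix_ne_zero (blockCoord hβ ∘ ps) ?_
  convert (Int.cast_ne_zero (α := ℚ)).mpr h using 1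
  rw [Int.cast_det]
  simp [Matrix.map, blockVec_apply_blockCoord]

def blockRoots (n β : ℕ) : Finset (Fin n → ℚ) := univ.image (blockVec n β)

theorem exists_card_eq_image_eq_of_subset_blockRoots (hβ : 3 * β + 2 < n)
    {S : Finset (Fin n → ℚ)} (hS : S ⊆ blockRoots n β) :
    ∃ T : Finset (Fin 6), #T = #S ∧ T.image (blockVec n β) = S := by
  obtain ⟨T, -, rfl⟩ := subset_image_iff.mp hS
  exact ⟨T, (card_image_of_injective T (blockVec_injective hβ)).symm, rfl⟩

theorem two_le_finrank_span_of_subset_blockRoots (hβ : 3 * β + 2 < n)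
    {S : Finset (Fin n → ℚ)} (hS : S ⊆ blockRoots n β) (hcard : 2 ≤ #S) :
    2 ≤ finrank ℚ (span ℚ (S : Set (Fin n → ℚ))) := by
  obtain ⟨T, hT, rfl⟩ := exists_card_eq_image_eq_of_subset_blockRoots hβ hS
  obtain ⟨a, ha, b, hb, hab⟩ := one_lt_card.mp (show 1 < #T by omega)
  obtain ⟨p, q, hpq⟩ := exists_det_rootCoeff_pair_ne_zero a b hab
  refine le_finrank_span_of_linearIndependent (linearIndependent_blockVec hβ _ _ hpq) ?_
  simp only [Set.range_subset_iff, Fin.forall_fin_two, coe_image]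
  exact ⟨⟨a, ha, rfl⟩, b, hb, rfl⟩

theorem three_le_finrank_span_of_subset_blockRoots (hβ : 3 * β + 2 < n)
    {S : Finset (Fin n → ℚ)} (hS : S ⊆ blockRoots n β) (hcard : 4 ≤ #S) :
    3 ≤ finrank ℚ (span ℚ (S : Set (Fin n → ℚ))) := by
  obtain ⟨T, hT, rfl⟩ := exists_card_eq_image_eq_of_subset_blockRoots hβ hS
  obtain ⟨a, ha, b, hb, c, hc, habc⟩ := exists_det_rootCoeff_triple_ne_zero T (by omega)
  refine le_finrank_span_of_linearIndependent (linearIndependent_blockVec hβ _ id habc) ?_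
  simp only [Set.range_subset_iff, Fin.forall_fin_succ, coe_image]
  exact ⟨⟨a, ha, rfl⟩, ⟨b, hb, rfl⟩, ⟨c, hc, rfl⟩, fun i => i.elim0⟩

theorem span_blockRoots_le : span ℚ (blockRoots n β : Set (Fin n → ℚ)) ≤
    span ℚ (Set.range fun s : Fin 3 => stdVec n (3 * β + s)) := by
  simp only [span_le, blockRoots, coe_image, Set.image_subset_iff]
  intro t _
  simp only [Set.mem_preimage, SetLike.mem_coe, blockVec]
  exact sum_mem fun s _ => smul_mem _ _ (subset_span ⟨s, rfl⟩)

theorem finrank_span_le_three_of_subset_blockRoots {S : Finset (Fin n → ℚ)}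
    (hS : S ⊆ blockRoots n β) : finrank ℚ (span ℚ (S : Set (Fin n → ℚ))) ≤ 3 :=
  calc finrank ℚ (span ℚ (S : Set (Fin n → ℚ)))
      ≤ finrank ℚ (span ℚ (Set.range fun s : Fin 3 => stdVec n (3 * β + s))) :=
        Submodule.finrank_mono ((span_mono (by exact_mod_cast hS)).trans span_blockRoots_le)
    _ ≤ 3 := (finrank_range_le_card (R := ℚ) _).trans_eq (Fintype.card_fin 3)

theorem finrank_span_image_blockVec_013_le_two :
    finrank ℚ (span ℚ
      (({0, 1, 3} : Finset (Fin 6)).image (blockVec n β) : Set (Fin n → ℚ))) ≤ 2 := by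
  have h3 : blockVec n β 3 = blockVec n β 0 - blockVec n β 1 := by
    simp [blockVec, rootCoeff, Fin.sum_univ_three, sub_eq_add_neg]
  rw [image_insert, image_insert, image_singleton, h3, coe_insert, coe_insert, coe_singleton]
  exact finrank_span_triple_sub_le_two _ _

theorem finrank_span_image_blockVec_le_card (T : Finset (Fin 6)) :
    finrank ℚ (span ℚ (T.image (blockVec n β) : Set (Fin n → ℚ))) ≤ #T :=
  (finrank_span_finset_le_card _).trans card_image_le

theorem blockVec_mem_pi (t : Fin 6) :
    blockVec n β t ∈
      Submodule.pi {j : Fin n | (j : ℕ) / 3 ≠ β} fun _ => (⊥ : Submodule ℚ ℚ) := by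
  refine sum_mem fun s _ => smul_mem _ _ (Submodule.mem_pi.mpr fun j hj => ?_)
  have := s.isLt
  simp only [stdVec, mem_bot, ite_eq_right_iff, one_ne_zero, imp_false]
  exact fun h => hj (by omega)

end Block

def z3kVectors (k : ℕ) : Finset (Fin (3 * k) → ℚ) :=
  (range k).biUnion fun β => blockRoots (3 * k) β

section Z3k

variable {k : ℕ}

theorem z3kVectors_eq_biUnion : z3kVectors k = (range k).biUnion fun β =>
    {stdVec (3 * k) (3 * β), stdVec (3 * k) (3 * β + 1), stdVec (3 * k) (3 * β + 2),
       stdVec (3 * k) (3 * β) - stdVec (3 * k) (3 * β + 1),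
       stdVec (3 * k) (3 * β + 1) - stdVec (3 * k) (3 * β + 2),
       stdVec (3 * k) (3 * β) - stdVec (3 * k) (3 * β + 2)} := by
  simp only [z3kVectors, blockRoots, image_blockVec]

theorem mem_z3kVectors {v : Fin (3 * k) → ℚ} :
    v ∈ z3kVectors k ↔ ∃ β < k, ∃ t, blockVec (3 * k) β t = v := by
  simp [z3kVectors, blockRoots]

theorem blockRoots_subset_z3kVectors {β : ℕ} (hβ : β < k) :
    blockRoots (3 * k) β ⊆ z3kVectors k :=
  subset_biUnion_of_mem _ (mem_range.mpr hβ)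

theorem ne_zero_of_mem_z3kVectors {v : Fin (3 * k) → ℚ} (hv : v ∈ z3kVectors k) :
    v ≠ 0 := by
  obtain ⟨β, hβ, t, rfl⟩ := mem_z3kVectors.mp hv
  exact blockVec_ne_zero (by omega) t

theorem disjoint_span_filter_blockRoots {S : Finset (Fin (3 * k) → ℚ)} (hS : S ⊆ z3kVectors k)
    (β : ℕ) :
    Disjoint (span ℚ (S.filter (· ∈ blockRoots (3 * k) β) : Set (Fin (3 * k) → ℚ)))
      (span ℚ (S.filter (· ∉ blockRoots (3 * k) β) : Set (Fin (3 * k) → ℚ))) := by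
  refine (disjoint_pi_bot_compl {j : Fin (3 * k) | (j : ℕ) / 3 ≠ β}).mono
    (span_le.mpr fun v hv => ?_) (span_le.mpr fun v hv => ?_)
  · obtain ⟨t, -, rfl⟩ := mem_image.mp (mem_filter.mp hv).2
    exact blockVec_mem_pi t
  · obtain ⟨hvS, hvβ⟩ := mem_filter.mp hv
    obtain ⟨γ, -, t, rfl⟩ := mem_z3kVectors.mp (hS hvS)
    have hγ : γ ≠ β := by
      rintro rfl
      exact hvβ (mem_image_of_mem _ (mem_univ t))
    refine Submodule.mem_pi.mpr fun j hj => Submodule.mem_pi.mp (blockVec_mem_pi t) j ?_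
    simp only [Set.mem_compl_iff, Set.mem_ofPred_eq, not_not] at hj ⊢
    omega

theorem exists_block_split {S : Finset (Fin (3 * k) → ℚ)} (hS : S ⊆ z3kVectors k)
    (hne : S.Nonempty) :
    ∃ β < k, ∃ S₁ ⊆ S, ∃ S₂ ⊆ S, S₁ ⊆ blockRoots (3 * k) β ∧ S₁.Nonempty ∧
      #S₁ + #S₂ = #S ∧
      finrank ℚ (span ℚ (S : Set (Fin (3 * k) → ℚ))) =
        finrank ℚ (span ℚ (S₁ : Set (Fin (3 * k) → ℚ))) +
          finrank ℚ (span ℚ (S₂ : Set (Fin (3 * k) → ℚ))) := by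
  obtain ⟨u, hu⟩ := hne
  obtain ⟨β, hβ, t, rfl⟩ := mem_z3kVectors.mp (hS hu)
  exact ⟨β, hβ, _, filter_subset _ _, _, filter_subset _ _, fun v hv => (mem_filter.mp hv).2,
    ⟨_, mem_filter.mpr ⟨hu, mem_image_of_mem _ (mem_univ t)⟩⟩,
    card_filter_add_card_filter_not _,
    finrank_span_eq_add_of_disjoint_filter S _ (disjoint_span_filter_blockRoots hS β)⟩

theorem one_le_finrank_span_of_subset_z3kVectors {S : Finset (Fin (3 * k) → ℚ)}
    (hS : S ⊆ z3kVectors k) (hne : S.Nonempty) :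
    1 ≤ finrank ℚ (span ℚ (S : Set (Fin (3 * k) → ℚ))) := by
  obtain ⟨v, hv⟩ := hne
  exact one_le_finrank_span (mem_coe.mpr hv) (ne_zero_of_mem_z3kVectors (hS hv))

theorem two_le_finrank_span_of_subset_z3kVectors {S : Finset (Fin (3 * k) → ℚ)}
    (hS : S ⊆ z3kVectors k) (hcard : 2 ≤ #S) :
    2 ≤ finrank ℚ (span ℚ (S : Set (Fin (3 * k) → ℚ))) := by
  obtain ⟨β, hβ, S₁, hS₁, S₂, hS₂, hS₁β, hne₁, hcard', hsplit⟩ :=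
    exists_block_split hS (card_pos.mp (by omega))
  rw [hsplit]
  by_cases h₁ : 2 ≤ #S₁
  · have := two_le_finrank_span_of_subset_blockRoots (by omega) hS₁β h₁
    omega
  · have := one_le_finrank_span_of_subset_z3kVectors (hS₁.trans hS) hne₁
    have := one_le_finrank_span_of_subset_z3kVectors (hS₂.trans hS) (card_pos.mp (by omega))
    omega

theorem three_le_finrank_span_of_subset_z3kVectors {S : Finset (Fin (3 * k) → ℚ)}
    (hS : S ⊆ z3kVectors k) (hcard : 4 ≤ #S) :
    3 ≤ finrank ℚ (span ℚ (S : Set (Fin (3 * k) → ℚ))) := by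
  obtain ⟨β, hβ, S₁, hS₁, S₂, hS₂, hS₁β, hne₁, hcard', hsplit⟩ :=
    exists_block_split hS (card_pos.mp (by omega))
  rw [hsplit]
  rcases Nat.eq_zero_or_pos #S₂ with h₂ | h₂
  · have := three_le_finrank_span_of_subset_blockRoots (by omega) hS₁β (by omega)
    omega
  have := one_le_finrank_span_of_subset_z3kVectors (hS₁.trans hS) hne₁
  have := one_le_finrank_span_of_subset_z3kVectors (hS₂.trans hS) (card_pos.mp h₂)
  by_cases h₁ : 2 ≤ #S₁
  · have := two_le_finrank_span_of_subset_blockRoots (by omega) hS₁β h₁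
    omega
  · have := two_le_finrank_span_of_subset_z3kVectors (hS₂.trans hS) (by omega)
    omega

theorem depthChart_z3kVectors_eq (hk : 1 ≤ k) {m r : ℕ} (T : Finset (Fin 6)) (hT : #T = m)
    (hup : finrank ℚ (span ℚ (T.image (blockVec (3 * k) 0) : Set (Fin (3 * k) → ℚ))) ≤ r)
    (hlow : ∀ S ⊆ z3kVectors k, #S = m →
      r ≤ finrank ℚ (span ℚ (S : Set (Fin (3 * k) → ℚ)))) :
    depthChart (z3kVectors k) m = r := by
  have hsub : T.image (blockVec (3 * k) 0) ⊆ z3kVectors k :=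
    (image_subset_image (subset_univ T)).trans (blockRoots_subset_z3kVectors hk)
  have hcard : #(T.image (blockVec (3 * k) 0)) = m := by
    rw [card_image_of_injective _ (blockVec_injective (by omega)), hT]
  exact depthChart_natCast_eq (hcard ▸ card_le_card hsub) ⟨_, hsub, hcard, hup⟩ hlow

end Z3k

/-- For `k ≥ 1`, the set `C ⊆ ℚ^{3k}` consisting, for each `β = 0, …, k - 1`, of the
six vectors `e_{3β+1}, e_{3β+2}, e_{3β+3}, e_{3β+1} - e_{3β+2}, e_{3β+2} - e_{3β+3},
e_{3β+1} - e_{3β+3}` (standard basis indexed from `1`) has depth chart beginning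
`0, 1, 2, 2, 3, 3, 3`. -/
theorem depthChart_z3k (k : ℕ) (hk : 1 ≤ k)
    (C : Finset (Fin (3 * k) → ℚ))
    (hC : C = (Finset.range k).biUnion (fun β =>
      {stdVec (3 * k) (3 * β), stdVec (3 * k) (3 * β + 1), stdVec (3 * k) (3 * β + 2),
       stdVec (3 * k) (3 * β) - stdVec (3 * k) (3 * β + 1),
       stdVec (3 * k) (3 * β + 1) - stdVec (3 * k) (3 * β + 2),
       stdVec (3 * k) (3 * β) - stdVec (3 * k) (3 * β + 2)})) :
    depthChart C 0 = 0 ∧ depthChart C 1 = 1 ∧ depthChart C 2 = 2 ∧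
    depthChart C 3 = 2 ∧ depthChart C 4 = 3 ∧ depthChart C 5 = 3 ∧
    depthChart C 6 = 3 := by
  rw [hC, ← z3kVectors_eq_biUnion]
  have hle_three (T : Finset (Fin 6)) :=
    finrank_span_le_three_of_subset_blockRoots (n := 3 * k) (β := 0)
      (image_subset_image (subset_univ T))
  refine ⟨?_, ?_, ?_, ?_, ?_, ?_, ?_⟩
  · exact_mod_cast depthChart_z3kVectors_eq hk (m := 0) (r := 0) ∅ rfl
      (finrank_span_image_blockVec_le_card _) fun _ _ _ => Nat.zero_le _
  · exact_mod_cast depthChart_z3kVectors_eq hk (m := 1) (r := 1) {0} rfl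
      (finrank_span_image_blockVec_le_card _) fun S hS hcard =>
        one_le_finrank_span_of_subset_z3kVectors hS (card_pos.mp (by omega))
  · exact_mod_cast depthChart_z3kVectors_eq hk (m := 2) (r := 2) {0, 1} rfl
      (finrank_span_image_blockVec_le_card _) fun S hS hcard =>
        two_le_finrank_span_of_subset_z3kVectors hS (by omega)
  · exact_mod_cast depthChart_z3kVectors_eq hk (m := 3) (r := 2) {0, 1, 3} rfl
      finrank_span_image_blockVec_013_le_two fun S hS hcard =>
        two_le_finrank_span_of_subset_z3kVectors hS (by omega)
  · exact_mod_cast depthChart_z3kVectors_eq hk (m := 4) (r := 3) {0, 1, 2, 3} rfl (hle_three _)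
      fun S hS hcard => three_le_finrank_span_of_subset_z3kVectors hS (by omega)
  · exact_mod_cast depthChart_z3kVectors_eq hk (m := 5) (r := 3) {0, 1, 2, 3, 4} rfl (hle_three _)
      fun S hS hcard => three_le_finrank_span_of_subset_z3kVectors hS (by omega)
  · exact_mod_cast depthChart_z3kVectors_eq hk (m := 6) (r := 3) univ rfl (hle_three _)
      fun S hS hcard => three_le_finrank_span_of_subset_z3kVectors hS (by omega)
end

section
/- Let k ≥ 1 be an integer and let e_1, …, e_{3k+1} denote the standard basis of ℚ^{3k+1}. Let C ⊆ ℚ^{3k+1} be the set of 6k + 1 vectors consisting, for each β = 0, 1, …, k − 1, of the six vectors e_{3β+1}, e_{3β+2}, e_{3β+3}, e_{3β+1} − e_{3β+2}, e_{3β+2} − e_{3β+3}, e_{3β+1} − e_{3β+3}, together with the vector e_{3k+1}. Then the depth chart of C satisfies d_C(0) = 0, d_C(1) = 1, d_C(2) = 2, d_C(3) = 2, d_C(4) = 3, d_C(5) = 3, and d_C(6) = 3. -/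
namespace DCaux
open Submodule Module

variable {m : ℕ}

/-- The vector `e_x - e_y`. -/
def r (x y : Fin m) : Fin m → ℚ := fun j => if j = x then 1 else if j = y then -1 else 0

lemma r_fst {x y : Fin m} : r x y x = 1 := by simp [r]

lemma r_snd {x y : Fin m} (h : x ≠ y) : r x y y = -1 := by simp [r, h.symm]

lemma r_other {x y j : Fin m} (hx : j ≠ x) (hy : j ≠ y) : r x y j = 0 := by simp [r, hx, hy]

lemma r_ne_zero {x y : Fin m} : r x y ≠ 0 := by
  intro h
  have := congrFun h x
  simp [r_fst] at this

lemma smul_edge {x1 y1 x2 y2 : Fin m} (h1 : x1 < y1) (h2 : x2 < y2) {c : ℚ}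
    (h : r x1 y1 = c • r x2 y2) : x1 = x2 ∧ y1 = y2 := by
  have hx := congrFun h x1
  rw [r_fst] at hx
  simp only [Pi.smul_apply, smul_eq_mul] at hx
  by_cases hxx : x1 = x2
  · subst hxx
    rw [r_fst, mul_one] at hx
    subst hx
    rw [one_smul] at h
    have hy := congrFun h y1
    rw [r_snd h1.ne] at hy
    refine ⟨rfl, ?_⟩
    by_cases hy1 : y1 = x1
    · exact absurd hy1 h1.ne'
    by_cases hy2 : y1 = y2
    · exact hy2
    · rw [r_other hy1 hy2] at hy; norm_num at hy
  · have hxy2 : x1 = y2 := by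
      by_contra hxy2
      rw [r_other hxx hxy2, mul_zero] at hx
      norm_num at hx
    -- x1 = y2, so c = -1
    subst hxy2
    rw [r_snd h2.ne, mul_neg_one] at hx
    have hc : c = -1 := by linarith
    subst hc
    have hx2 := congrFun h x2
    simp only [Pi.smul_apply, smul_eq_mul, r_fst, neg_mul, one_mul] at hx2
    -- r x1 y1 x2 = -1, with x2 \ne x1
    have hne : x2 ≠ x1 := h2.ne
    by_cases hx2y1 : x2 = y1
    · subst hx2y1
      exact absurd (h1.trans h2) (lt_irrefl _)
    · rw [r_other hne hx2y1] at hx2; norm_num at hx2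
  

lemma r_injective {x1 y1 x2 y2 : Fin m} (h1 : x1 < y1) (h2 : x2 < y2)
    (h : r x1 y1 = r x2 y2) : x1 = x2 ∧ y1 = y2 :=
  smul_edge h1 h2 (by rw [one_smul]; exact h)

lemma edge_pair_indep {x1 y1 x2 y2 : Fin m} (h1 : x1 < y1) (h2 : x2 < y2)
    (hne : r x1 y1 ≠ r x2 y2) :
    LinearIndependent ℚ ![r x1 y1, r x2 y2] := by
  rw [LinearIndependent.pair_iff]
  intro s t hst
  by_cases hs : s = 0
  · subst hs
    rw [zero_smul, zero_add] at hst
    rcases smul_eq_zero.mp hst with ht | hv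
    · exact ⟨rfl, ht⟩
    · exact absurd hv r_ne_zero
  · exfalso
    have hv : r x1 y1 = (-t / s) • r x2 y2 := by
      have : s • r x1 y1 = (-t) • r x2 y2 := by
        rw [neg_smul]
        rw [add_eq_zero_iff_eq_neg] at hst
        exact hst
      calc r x1 y1 = s⁻¹ • (s • r x1 y1) := by rw [smul_smul, inv_mul_cancel₀ hs, one_smul]
      _ = (-t / s) • r x2 y2 := by rw [this, smul_smul]; ring_nf
    obtain ⟨hx, hy⟩ := smul_edge h1 h2 hv
    exact hne (by rw [hx, hy])


lemma edge_mem_span {x1 y1 x2 y2 x y : Fin m} (h1 : x1 < y1) (h2 : x2 < y2) (hxy : x < y)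
    (hne : r x1 y1 ≠ r x2 y2)
    (hmem : (r x y : Fin m → ℚ) ∈ span ℚ ({r x1 y1, r x2 y2} : Set (Fin m → ℚ)))
    (hv1 : r x y ≠ r x1 y1) (hv2 : r x y ≠ r x2 y2) :
    (y1 = x2 ∧ x = x1 ∧ y = y2) ∨ (x1 = y2 ∧ x = x2 ∧ y = y1) ∨
    (x1 = x2 ∧ ((x = y1 ∧ y = y2) ∨ (x = y2 ∧ y = y1))) ∨
    (y1 = y2 ∧ ((x = x1 ∧ y = x2) ∨ (x = x2 ∧ y = x1))) := by
  obtain ⟨s, t, hv⟩ := Submodule.mem_span_pair.mp hmem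
  have hco : ∀ j, r x y j = s * r x1 y1 j + t * r x2 y2 j := by
    intro j; rw [← hv]; simp
  have hsupp : ∀ j, r x y j ≠ 0 → j = x ∨ j = y := by
    intro j hj
    by_contra hc
    push_neg at hc
    exact hj (r_other hc.1 hc.2)
  by_cases hs : s = 0
  · exfalso
    apply hv2
    have hsm : r x y = t • r x2 y2 := by rw [← hv, hs]; simp
    obtain ⟨hx, hy⟩ := smul_edge hxy h2 hsm
    rw [hx, hy]
  by_cases ht : t = 0
  · exfalso
    apply hv1
    have hsm : r x y = s • r x1 y1 := by rw [← hv, ht]; simp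
    obtain ⟨hx, hy⟩ := smul_edge hxy h1 hsm
    rw [hx, hy]
  by_cases e1 : y1 = x2
  · -- head-tail: x1 < y1 = x2 < y2
    subst e1
    have hord : x1 < y2 := h1.trans h2
    have hvx1 : r x y x1 = s := by
      rw [hco x1, r_fst, r_other (ne_of_lt h1) (ne_of_lt hord)]; ring
    have hvy2 : r x y y2 = -t := by
      rw [hco y2, r_other (ne_of_gt hord) (ne_of_gt h2), r_snd (ne_of_lt h2)]; ring
    have hm1 : x1 = x ∨ x1 = y := hsupp x1 (by rw [hvx1]; exact hs)
    have hm2 : y2 = x ∨ y2 = y := hsupp y2 (by rw [hvy2]; simpa using ht)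
    rcases hm1 with a | a <;> rcases hm2 with b | b
    · exact absurd (a.trans b.symm) (ne_of_lt hord)
    · exact Or.inl ⟨rfl, a.symm, b.symm⟩
    · exfalso; rw [← b, ← a] at hxy; exact absurd (hxy.trans hord) (lt_irrefl _)
    · exact absurd (a.trans b.symm) (ne_of_lt hord)
  by_cases e2 : x1 = y2
  · -- tail-head: x2 < y2 = x1 < y1
    subst e2
    have hord : x2 < y1 := h2.trans h1
    have hvx2 : r x y x2 = t := by
      rw [hco x2, r_fst, r_other (ne_of_lt h2) (ne_of_lt hord)]; ring
    have hvy1 : r x y y1 = -s := by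
      rw [hco y1, r_other (ne_of_gt hord) (ne_of_gt h1), r_snd (ne_of_lt h1)]; ring
    have hm1 : x2 = x ∨ x2 = y := hsupp x2 (by rw [hvx2]; exact ht)
    have hm2 : y1 = x ∨ y1 = y := hsupp y1 (by rw [hvy1]; simpa using hs)
    rcases hm1 with a | a <;> rcases hm2 with b | b
    · exact absurd (a.trans b.symm) (ne_of_lt hord)
    · exact Or.inr (Or.inl ⟨rfl, a.symm, b.symm⟩)
    · exfalso; rw [← b, ← a] at hxy; exact absurd (hxy.trans hord) (lt_irrefl _)
    · exact absurd (a.trans b.symm) (ne_of_lt hord)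
  by_cases e3 : x1 = x2
  · -- head-head
    subst e3
    have hyy : y1 ≠ y2 := by
      intro hyy
      exact hne (by rw [hyy])
    have hvy1 : r x y y1 = -s := by
      rw [hco y1, r_snd (ne_of_lt h1), r_other (ne_of_gt h1) hyy]; ring
    have hvy2 : r x y y2 = -t := by
      rw [hco y2, r_other (ne_of_gt h2) (Ne.symm hyy), r_snd (ne_of_lt h2)]; ring
    have hm1 : y1 = x ∨ y1 = y := hsupp y1 (by rw [hvy1]; simpa using hs)
    have hm2 : y2 = x ∨ y2 = y := hsupp y2 (by rw [hvy2]; simpa using ht)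
    refine Or.inr (Or.inr (Or.inl ⟨rfl, ?_⟩))
    rcases hm1 with a | a <;> rcases hm2 with b | b
    · exact absurd (a.trans b.symm) hyy
    · exact Or.inl ⟨a.symm, b.symm⟩
    · exact Or.inr ⟨b.symm, a.symm⟩
    · exact absurd (a.trans b.symm) hyy
  by_cases e4 : y1 = y2
  · -- tail-tail
    subst e4
    have hxx : x1 ≠ x2 := e3
    have hvx1 : r x y x1 = s := by
      rw [hco x1, r_fst, r_other hxx (ne_of_lt h1)]; ring
    have hvx2 : r x y x2 = t := by
      rw [hco x2, r_fst, r_other (Ne.symm hxx) (ne_of_lt h2)]; ring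
    have hm1 : x1 = x ∨ x1 = y := hsupp x1 (by rw [hvx1]; exact hs)
    have hm2 : x2 = x ∨ x2 = y := hsupp x2 (by rw [hvx2]; exact ht)
    refine Or.inr (Or.inr (Or.inr ⟨rfl, ?_⟩))
    rcases hm1 with a | a <;> rcases hm2 with b | b
    · exact absurd (a.trans b.symm) hxx
    · exact Or.inl ⟨a.symm, b.symm⟩
    · exact Or.inr ⟨b.symm, a.symm⟩
    · exact absurd (a.trans b.symm) hxx
  · -- disjoint: contradiction
    exfalso
    have hvx1 : r x y x1 = s := by
      rw [hco x1, r_fst, r_other e3 e2]; ring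
    have hvy1 : r x y y1 = -s := by
      rw [hco y1, r_snd (ne_of_lt h1), r_other e1 e4]; ring
    have hvx2 : r x y x2 = t := by
      rw [hco x2, r_fst, r_other (Ne.symm e3) (Ne.symm e1)]; ring
    have hm1 : x1 = x ∨ x1 = y := hsupp x1 (by rw [hvx1]; exact hs)
    have hm2 : y1 = x ∨ y1 = y := hsupp y1 (by rw [hvy1]; simpa using hs)
    have hm3 : x2 = x ∨ x2 = y := hsupp x2 (by rw [hvx2]; exact ht)
    rcases hm1 with a | a <;> rcases hm2 with b | b <;> rcases hm3 with c | c
    · exact (ne_of_lt h1) (a.trans b.symm)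
    · exact (ne_of_lt h1) (a.trans b.symm)
    · exact e3 (a.trans c.symm)
    · exact e1 (b.trans c.symm)
    · exact e1 (b.trans c.symm)
    · exact e3 (a.trans c.symm)
    · exact (ne_of_lt h1) (a.trans b.symm)
    · exact (ne_of_lt h1) (a.trans b.symm)


lemma edge_span_unique {x1 y1 x2 y2 x y x' y' : Fin m}
    (h1 : x1 < y1) (h2 : x2 < y2) (hxy : x < y) (hxy' : x' < y')
    (hne : r x1 y1 ≠ r x2 y2)
    (hmem : (r x y : Fin m → ℚ) ∈ span ℚ ({r x1 y1, r x2 y2} : Set (Fin m → ℚ)))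
    (hmem' : (r x' y' : Fin m → ℚ) ∈ span ℚ ({r x1 y1, r x2 y2} : Set (Fin m → ℚ)))
    (hv1 : r x y ≠ r x1 y1) (hv2 : r x y ≠ r x2 y2)
    (hw1 : r x' y' ≠ r x1 y1) (hw2 : r x' y' ≠ r x2 y2) :
    r x y = r x' y' := by
  have pne : ¬(x1 = x2 ∧ y1 = y2) := fun ⟨a, b⟩ => hne (by rw [a, b])
  have A := edge_mem_span h1 h2 hxy hne hmem hv1 hv2
  have B := edge_mem_span h1 h2 hxy' hne hmem' hw1 hw2
  have hfin : x = x' ∧ y = y' := by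
    simp only [Fin.ext_iff, Fin.lt_def] at A B h1 h2 hxy hxy' pne ⊢
    omega
  rw [hfin.1, hfin.2]

/-- A vector of the form `e_x - e_y` with `x < y`. -/
def IsEdge (v : Fin m → ℚ) : Prop := ∃ x y : Fin m, x < y ∧ v = r x y

lemma isEdge_pair_indep {v1 v2 : Fin m → ℚ} (h1 : IsEdge v1) (h2 : IsEdge v2)
    (hne : v1 ≠ v2) : LinearIndependent ℚ ![v1, v2] := by
  obtain ⟨x1, y1, hab1, rfl⟩ := h1
  obtain ⟨x2, y2, hab2, rfl⟩ := h2
  exact edge_pair_indep hab1 hab2 hne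

lemma four_edges {v1 v2 v3 v4 : Fin m → ℚ}
    (h1 : IsEdge v1) (h2 : IsEdge v2) (h3 : IsEdge v3) (h4 : IsEdge v4)
    (h12 : v1 ≠ v2) (h13 : v1 ≠ v3) (h14 : v1 ≠ v4)
    (h23 : v2 ≠ v3) (h24 : v2 ≠ v4) (h34 : v3 ≠ v4) :
    ∃ w1 w2 w3 : Fin m → ℚ, w1 ∈ ({v1, v2, v3, v4} : Set (Fin m → ℚ)) ∧
      w2 ∈ ({v1, v2, v3, v4} : Set (Fin m → ℚ)) ∧ w3 ∈ ({v1, v2, v3, v4} : Set (Fin m → ℚ)) ∧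
      LinearIndependent ℚ ![w1, w2, w3] := by
  have hpair : LinearIndependent ℚ ![v1, v2] := isEdge_pair_indep h1 h2 h12
  have hrange : Set.range ![v1, v2] = ({v1, v2} : Set (Fin m → ℚ)) := by
    simp [Set.pair_comm]
  by_cases hs3 : v3 ∈ span ℚ ({v1, v2} : Set (Fin m → ℚ))
  · by_cases hs4 : v4 ∈ span ℚ ({v1, v2} : Set (Fin m → ℚ))
    · exfalso
      obtain ⟨x1, y1, hab1, rfl⟩ := h1
      obtain ⟨x2, y2, hab2, rfl⟩ := h2
      obtain ⟨x3, y3, hab3, rfl⟩ := h3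
      obtain ⟨x4, y4, hab4, rfl⟩ := h4
      exact h34 (edge_span_unique hab1 hab2 hab3 hab4 h12 hs3 hs4
        (Ne.symm h13) (Ne.symm h23) (Ne.symm h14) (Ne.symm h24))
    · refine ⟨v4, v1, v2, by simp, by simp, by simp, ?_⟩
      have : LinearIndependent ℚ (Fin.cons v4 ![v1, v2] : Fin 3 → (Fin m → ℚ)) :=
        linearIndependent_fin_cons.mpr ⟨hpair, by rwa [hrange]⟩
      exact this
  · refine ⟨v3, v1, v2, by simp, by simp, by simp, ?_⟩
    have : LinearIndependent ℚ (Fin.cons v3 ![v1, v2] : Fin 3 → (Fin m → ℚ)) :=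
      linearIndependent_fin_cons.mpr ⟨hpair, by rwa [hrange]⟩
    exact this


lemma three_le_finrank {T : Finset (Fin m → ℚ)} {w1 w2 w3 : Fin m → ℚ}
    (hw1 : w1 ∈ T) (hw2 : w2 ∈ T) (hw3 : w3 ∈ T)
    (hind : LinearIndependent ℚ ![w1, w2, w3]) :
    3 ≤ finrank ℚ (span ℚ (T : Set (Fin m → ℚ))) := by
  have hsub : Set.range ![w1, w2, w3] ⊆ (T : Set (Fin m → ℚ)) := by
    rintro z ⟨i, rfl⟩
    fin_cases i <;> simpa
  have h3 : finrank ℚ (span ℚ (Set.range ![w1, w2, w3])) = 3 := by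
    rw [finrank_span_eq_card hind]; simp
  calc (3 : ℕ) = finrank ℚ (span ℚ (Set.range ![w1, w2, w3])) := h3.symm
    _ ≤ finrank ℚ (span ℚ (T : Set (Fin m → ℚ))) :=
        Submodule.finrank_mono (span_mono hsub)

lemma two_le_finrank {T : Finset (Fin m → ℚ)} {w1 w2 : Fin m → ℚ}
    (hw1 : w1 ∈ T) (hw2 : w2 ∈ T)
    (hind : LinearIndependent ℚ ![w1, w2]) :
    2 ≤ finrank ℚ (span ℚ (T : Set (Fin m → ℚ))) := by
  have hsub : Set.range ![w1, w2] ⊆ (T : Set (Fin m → ℚ)) := by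
    rintro z ⟨i, rfl⟩
    fin_cases i <;> simpa
  have h2 : finrank ℚ (span ℚ (Set.range ![w1, w2])) = 2 := by
    rw [finrank_span_eq_card hind]; simp
  calc (2 : ℕ) = finrank ℚ (span ℚ (Set.range ![w1, w2])) := h2.symm
    _ ≤ finrank ℚ (span ℚ (T : Set (Fin m → ℚ))) :=
        Submodule.finrank_mono (span_mono hsub)

lemma edges_finrank_ge_one {T : Finset (Fin m → ℚ)} (hT : ∀ v ∈ T, IsEdge v)
    (hcard : 1 ≤ T.card) : 1 ≤ finrank ℚ (span ℚ (T : Set (Fin m → ℚ))) := by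
  obtain ⟨v, hv⟩ := Finset.card_pos.mp hcard
  obtain ⟨a, b, hab, rfl⟩ := hT v hv
  have h1 : finrank ℚ (span ℚ ({r a b} : Set (Fin m → ℚ))) = 1 :=
    finrank_span_singleton r_ne_zero
  calc (1 : ℕ) = finrank ℚ (span ℚ ({r a b} : Set (Fin m → ℚ))) := h1.symm
    _ ≤ finrank ℚ (span ℚ (T : Set (Fin m → ℚ))) :=
        Submodule.finrank_mono (span_mono (by simpa using hv))

lemma edges_finrank_ge_two {T : Finset (Fin m → ℚ)} (hT : ∀ v ∈ T, IsEdge v)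
    (hcard : 2 ≤ T.card) : 2 ≤ finrank ℚ (span ℚ (T : Set (Fin m → ℚ))) := by
  obtain ⟨a, ha, b, hb, hab⟩ := Finset.one_lt_card.mp hcard
  exact two_le_finrank ha hb (isEdge_pair_indep (hT a ha) (hT b hb) hab)

lemma edges_finrank_ge_three {T : Finset (Fin m → ℚ)} (hT : ∀ v ∈ T, IsEdge v)
    (hcard : 4 ≤ T.card) : 3 ≤ finrank ℚ (span ℚ (T : Set (Fin m → ℚ))) := by
  obtain ⟨T', hT'sub, hT'card⟩ := Finset.exists_subset_card_eq hcard
  rw [Finset.card_eq_succ] at hT'card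
  obtain ⟨v4, T3, hv4, rfl, hT3⟩ := hT'card
  rw [Finset.card_eq_three] at hT3
  obtain ⟨v1, v2, v3, h12, h13, h23, rfl⟩ := hT3
  have m1 : v1 ∈ T := hT'sub (by simp)
  have m2 : v2 ∈ T := hT'sub (by simp)
  have m3 : v3 ∈ T := hT'sub (by simp)
  have m4 : v4 ∈ T := hT'sub (by simp)
  have hv41 : v1 ≠ v4 := fun h => hv4 (by simp [← h])
  have hv42 : v2 ≠ v4 := fun h => hv4 (by simp [← h])
  have hv43 : v3 ≠ v4 := fun h => hv4 (by simp [← h])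
  obtain ⟨w1, w2, w3, hw1, hw2, hw3, hind⟩ :=
    four_edges (hT v1 m1) (hT v2 m2) (hT v3 m3) (hT v4 m4)
      h12 h13 hv41 h23 hv42 hv43
  have hmem : ∀ w, w ∈ ({v1, v2, v3, v4} : Set (Fin m → ℚ)) → w ∈ T := by
    rintro w (rfl | rfl | rfl | rfl) <;> assumption
  exact three_le_finrank (hmem w1 hw1) (hmem w2 hw2) (hmem w3 hw3) hind


/-- Embedding of `ℚ^n` into `ℚ^{n+1}` sending `v` to `(v, -∑ v)`, which sends
standard basis vectors and their differences to "edge" vectors. -/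
def psi (n : ℕ) : (Fin n → ℚ) →ₗ[ℚ] (Fin (n + 1) → ℚ) where
  toFun v := fun j => if h : (j : ℕ) < n then v ⟨j, h⟩ else -(∑ i, v i)
  map_add' v w := by
    funext j
    by_cases h : (j : ℕ) < n <;> simp [h, Finset.sum_add_distrib] <;> ring
  map_smul' c v := by
    funext j
    by_cases h : (j : ℕ) < n <;> simp [h, Finset.mul_sum]

lemma psi_injective (n : ℕ) : Function.Injective (psi n) := by
  intro v w h
  funext i
  have := congrFun h ⟨(i : ℕ), by omega⟩
  simpa [psi, i.isLt] using this

lemma sum_stdVec {n i : ℕ} (hi : i < n) : (∑ j, stdVec n i j) = 1 := by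
  have hcond : ∀ j : Fin n, ((j : ℕ) = i) = (j = ⟨i, hi⟩) := by
    intro j; rw [Fin.ext_iff]
  simp only [stdVec, hcond]
  rw [Finset.sum_ite_eq' Finset.univ (⟨i, hi⟩ : Fin n)]
  simp

lemma psi_stdVec {n i : ℕ} (hi : i < n) :
    psi n (stdVec n i) = r ⟨i, by omega⟩ ⟨n, by omega⟩ := by
  funext j
  show (if h : (j : ℕ) < n then stdVec n i ⟨j, h⟩ else -(∑ i', stdVec n i i')) = _
  have e1 : (j = (⟨i, by omega⟩ : Fin (n + 1))) ↔ (j : ℕ) = i := by rw [Fin.ext_iff]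
  have e2 : (j = (⟨n, by omega⟩ : Fin (n + 1))) ↔ (j : ℕ) = n := by rw [Fin.ext_iff]
  by_cases h : (j : ℕ) < n
  · rw [dif_pos h]
    have hn : ¬((j : ℕ) = n) := by omega
    simp only [r, stdVec, eq_iff_iff.mpr e1, eq_iff_iff.mpr e2]
    by_cases hji : (j : ℕ) = i <;> simp [hji, hn]
  · rw [dif_neg h, sum_stdVec hi]
    have hjn : (j : ℕ) = n := by omega
    have hni : ¬((j : ℕ) = i) := by omega
    simp only [r, eq_iff_iff.mpr e1, eq_iff_iff.mpr e2]
    rw [if_neg hni, if_pos hjn]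


lemma r_sub {x y N : Fin m} (hxy : x ≠ y) (hxN : x ≠ N) (hyN : y ≠ N) :
    r x N - r y N = r x y := by
  funext j
  simp only [Pi.sub_apply, r]
  by_cases hjx : j = x
  · subst hjx
    rw [if_pos rfl, if_pos rfl, if_neg hxy, if_neg hxN]
    ring
  · rw [if_neg hjx, if_neg hjx]
    by_cases hjy : j = y
    · subst hjy
      rw [if_pos rfl, if_pos rfl, if_neg hyN]
      ring
    · rw [if_neg hjy, if_neg hjy]
      ring

lemma psi_stdVec_sub {n i j : ℕ} (hij : i < j) (hj : j < n) :
    psi n (stdVec n i - stdVec n j) = r ⟨i, by omega⟩ ⟨j, by omega⟩ := by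
  rw [map_sub, psi_stdVec (show i < n by omega), psi_stdVec hj]
  exact r_sub (by simp [Fin.ext_iff]; omega) (by simp [Fin.ext_iff]; omega)
    (by simp [Fin.ext_iff]; omega)

lemma finrank_span_image {n : ℕ} (S : Finset (Fin n → ℚ)) :
    finrank ℚ (span ℚ ((S.image (psi n)) : Set (Fin (n + 1) → ℚ))) =
      finrank ℚ (span ℚ (S : Set (Fin n → ℚ))) := by
  rw [Finset.coe_image, Submodule.span_image]
  exact (Submodule.equivMapOfInjective _ (psi_injective n) _).finrank_eq.symm

end DCaux

set_option maxHeartbeats 2000000 in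
/-- For `k ≥ 1`, the set `C ⊆ ℚ^{3k+1}` consisting, for each `β = 0, …, k - 1`, of the
six vectors `e_{3β+1}, e_{3β+2}, e_{3β+3}, e_{3β+1} - e_{3β+2}, e_{3β+2} - e_{3β+3},
e_{3β+1} - e_{3β+3}` (standard basis indexed from `1`), together with `e_{3k+1}`,
has depth chart beginning `0, 1, 2, 2, 3, 3, 3`. -/
theorem depthChart_z3k1 (k : ℕ) (hk : 1 ≤ k)
    (C : Finset (Fin (3 * k + 1) → ℚ))
    (hC : C = ((Finset.range k).biUnion (fun β =>
      {stdVec (3 * k + 1) (3 * β), stdVec (3 * k + 1) (3 * β + 1),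
       stdVec (3 * k + 1) (3 * β + 2),
       stdVec (3 * k + 1) (3 * β) - stdVec (3 * k + 1) (3 * β + 1),
       stdVec (3 * k + 1) (3 * β + 1) - stdVec (3 * k + 1) (3 * β + 2),
       stdVec (3 * k + 1) (3 * β) - stdVec (3 * k + 1) (3 * β + 2)}))
      ∪ {stdVec (3 * k + 1) (3 * k)}) :
    depthChart C 0 = 0 ∧ depthChart C 1 = 1 ∧ depthChart C 2 = 2 ∧
    depthChart C 3 = 2 ∧ depthChart C 4 = 3 ∧ depthChart C 5 = 3 ∧
    depthChart C 6 = 3 := by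
  classical
  have hS6C : ∀ v ∈ ({stdVec (3 * k + 1) (3 * 0), stdVec (3 * k + 1) (3 * 0 + 1), stdVec (3 * k + 1) (3 * 0 + 2), (stdVec (3 * k + 1) (3 * 0) - stdVec (3 * k + 1) (3 * 0 + 1)), (stdVec (3 * k + 1) (3 * 0 + 1) - stdVec (3 * k + 1) (3 * 0 + 2)), (stdVec (3 * k + 1) (3 * 0) - stdVec (3 * k + 1) (3 * 0 + 2))} : Finset (Fin (3 * k + 1) → ℚ)), v ∈ C := by
    intro v hv
    rw [hC]
    exact Finset.mem_union_left _ (Finset.mem_biUnion.mpr ⟨0, Finset.mem_range.mpr hk, hv⟩)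
  have d12 : stdVec (3 * k + 1) 0 ≠ stdVec (3 * k + 1) 1 := by
    intro h
    have h' := congrFun h ⟨0, by omega⟩
    norm_num [stdVec] at h'
  have d13 : stdVec (3 * k + 1) 0 ≠ stdVec (3 * k + 1) 2 := by
    intro h
    have h' := congrFun h ⟨0, by omega⟩
    norm_num [stdVec] at h'
  have d14 : stdVec (3 * k + 1) 0 ≠ (stdVec (3 * k + 1) 0 - stdVec (3 * k + 1) 1) := by
    intro h
    have h' := congrFun h ⟨1, by omega⟩
    norm_num [stdVec] at h'
  have d15 : stdVec (3 * k + 1) 0 ≠ (stdVec (3 * k + 1) 1 - stdVec (3 * k + 1) 2) := by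
    intro h
    have h' := congrFun h ⟨1, by omega⟩
    norm_num [stdVec] at h'
  have d16 : stdVec (3 * k + 1) 0 ≠ (stdVec (3 * k + 1) 0 - stdVec (3 * k + 1) 2) := by
    intro h
    have h' := congrFun h ⟨2, by omega⟩
    norm_num [stdVec] at h'
  have d23 : stdVec (3 * k + 1) 1 ≠ stdVec (3 * k + 1) 2 := by
    intro h
    have h' := congrFun h ⟨1, by omega⟩
    norm_num [stdVec] at h'
  have d24 : stdVec (3 * k + 1) 1 ≠ (stdVec (3 * k + 1) 0 - stdVec (3 * k + 1) 1) := by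
    intro h
    have h' := congrFun h ⟨1, by omega⟩
    norm_num [stdVec] at h'
  have d25 : stdVec (3 * k + 1) 1 ≠ (stdVec (3 * k + 1) 1 - stdVec (3 * k + 1) 2) := by
    intro h
    have h' := congrFun h ⟨2, by omega⟩
    norm_num [stdVec] at h'
  have d26 : stdVec (3 * k + 1) 1 ≠ (stdVec (3 * k + 1) 0 - stdVec (3 * k + 1) 2) := by
    intro h
    have h' := congrFun h ⟨0, by omega⟩
    norm_num [stdVec] at h'
  have d34 : stdVec (3 * k + 1) 2 ≠ (stdVec (3 * k + 1) 0 - stdVec (3 * k + 1) 1) := by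
    intro h
    have h' := congrFun h ⟨2, by omega⟩
    norm_num [stdVec] at h'
  have d35 : stdVec (3 * k + 1) 2 ≠ (stdVec (3 * k + 1) 1 - stdVec (3 * k + 1) 2) := by
    intro h
    have h' := congrFun h ⟨2, by omega⟩
    norm_num [stdVec] at h'
  have d36 : stdVec (3 * k + 1) 2 ≠ (stdVec (3 * k + 1) 0 - stdVec (3 * k + 1) 2) := by
    intro h
    have h' := congrFun h ⟨2, by omega⟩
    norm_num [stdVec] at h'
  have d45 : (stdVec (3 * k + 1) 0 - stdVec (3 * k + 1) 1) ≠ (stdVec (3 * k + 1) 1 - stdVec (3 * k + 1) 2) := by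
    intro h
    have h' := congrFun h ⟨0, by omega⟩
    norm_num [stdVec] at h'
  have d46 : (stdVec (3 * k + 1) 0 - stdVec (3 * k + 1) 1) ≠ (stdVec (3 * k + 1) 0 - stdVec (3 * k + 1) 2) := by
    intro h
    have h' := congrFun h ⟨1, by omega⟩
    norm_num [stdVec] at h'
  have d56 : (stdVec (3 * k + 1) 1 - stdVec (3 * k + 1) 2) ≠ (stdVec (3 * k + 1) 0 - stdVec (3 * k + 1) 2) := by
    intro h
    have h' := congrFun h ⟨0, by omega⟩
    norm_num [stdVec] at h'
  have c1 : ({stdVec (3 * k + 1) (3 * 0)} : Finset (Fin (3 * k + 1) → ℚ)).card = 1 := Finset.card_singleton _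
  have c2 : ({stdVec (3 * k + 1) (3 * 0), stdVec (3 * k + 1) (3 * 0 + 1)} : Finset (Fin (3 * k + 1) → ℚ)).card = 2 := by
    rw [Finset.card_insert_of_notMem (by simp [d12]), Finset.card_singleton]
  have c3 : ({stdVec (3 * k + 1) (3 * 0), stdVec (3 * k + 1) (3 * 0 + 1), (stdVec (3 * k + 1) (3 * 0) - stdVec (3 * k + 1) (3 * 0 + 1))} : Finset (Fin (3 * k + 1) → ℚ)).card = 3 := by
    rw [Finset.card_insert_of_notMem (by simp [d12, d14]),
      Finset.card_insert_of_notMem (by simp [d24]), Finset.card_singleton]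
  have c3' : ({stdVec (3 * k + 1) (3 * 0), stdVec (3 * k + 1) (3 * 0 + 1), stdVec (3 * k + 1) (3 * 0 + 2)} : Finset (Fin (3 * k + 1) → ℚ)).card = 3 := by
    rw [Finset.card_insert_of_notMem (by simp [d12, d13]),
      Finset.card_insert_of_notMem (by simp [d23]), Finset.card_singleton]
  have c4 : ({stdVec (3 * k + 1) (3 * 0), stdVec (3 * k + 1) (3 * 0 + 1), stdVec (3 * k + 1) (3 * 0 + 2), (stdVec (3 * k + 1) (3 * 0) - stdVec (3 * k + 1) (3 * 0 + 1))} : Finset (Fin (3 * k + 1) → ℚ)).card = 4 := by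
    rw [Finset.card_insert_of_notMem (by simp [d12, d13, d14]),
      Finset.card_insert_of_notMem (by simp [d23, d24]),
      Finset.card_insert_of_notMem (by simp [d34]), Finset.card_singleton]
  have c5 : ({stdVec (3 * k + 1) (3 * 0), stdVec (3 * k + 1) (3 * 0 + 1), stdVec (3 * k + 1) (3 * 0 + 2), (stdVec (3 * k + 1) (3 * 0) - stdVec (3 * k + 1) (3 * 0 + 1)), (stdVec (3 * k + 1) (3 * 0 + 1) - stdVec (3 * k + 1) (3 * 0 + 2))} : Finset (Fin (3 * k + 1) → ℚ)).card = 5 := by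
    rw [Finset.card_insert_of_notMem (by simp [d12, d13, d14, d15]),
      Finset.card_insert_of_notMem (by simp [d23, d24, d25]),
      Finset.card_insert_of_notMem (by simp [d34, d35]),
      Finset.card_insert_of_notMem (by simp [d45]), Finset.card_singleton]
  have c6 : ({stdVec (3 * k + 1) (3 * 0), stdVec (3 * k + 1) (3 * 0 + 1), stdVec (3 * k + 1) (3 * 0 + 2), (stdVec (3 * k + 1) (3 * 0) - stdVec (3 * k + 1) (3 * 0 + 1)), (stdVec (3 * k + 1) (3 * 0 + 1) - stdVec (3 * k + 1) (3 * 0 + 2)), (stdVec (3 * k + 1) (3 * 0) - stdVec (3 * k + 1) (3 * 0 + 2))} : Finset (Fin (3 * k + 1) → ℚ)).card = 6 := by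
    rw [Finset.card_insert_of_notMem (by simp [d12, d13, d14, d15, d16]),
      Finset.card_insert_of_notMem (by simp [d23, d24, d25, d26]),
      Finset.card_insert_of_notMem (by simp [d34, d35, d36]),
      Finset.card_insert_of_notMem (by simp [d45, d46]),
      Finset.card_insert_of_notMem (by simp [d56]), Finset.card_singleton]
  have hS1C : ({stdVec (3 * k + 1) (3 * 0)} : Finset (Fin (3 * k + 1) → ℚ)) ⊆ C := by
    intro v hv; apply hS6C
    simp only [Finset.mem_insert, Finset.mem_singleton] at hv
    rcases hv with rfl <;> simp
  have hS2C : ({stdVec (3 * k + 1) (3 * 0), stdVec (3 * k + 1) (3 * 0 + 1)} : Finset (Fin (3 * k + 1) → ℚ)) ⊆ C := by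
    intro v hv; apply hS6C
    simp only [Finset.mem_insert, Finset.mem_singleton] at hv
    rcases hv with rfl|rfl <;> simp
  have hS3C : ({stdVec (3 * k + 1) (3 * 0), stdVec (3 * k + 1) (3 * 0 + 1), (stdVec (3 * k + 1) (3 * 0) - stdVec (3 * k + 1) (3 * 0 + 1))} : Finset (Fin (3 * k + 1) → ℚ)) ⊆ C := by
    intro v hv; apply hS6C
    simp only [Finset.mem_insert, Finset.mem_singleton] at hv
    rcases hv with rfl|rfl|rfl <;> simp
  have hS4C : ({stdVec (3 * k + 1) (3 * 0), stdVec (3 * k + 1) (3 * 0 + 1), stdVec (3 * k + 1) (3 * 0 + 2), (stdVec (3 * k + 1) (3 * 0) - stdVec (3 * k + 1) (3 * 0 + 1))} : Finset (Fin (3 * k + 1) → ℚ)) ⊆ C := by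
    intro v hv; apply hS6C
    simp only [Finset.mem_insert, Finset.mem_singleton] at hv
    rcases hv with rfl|rfl|rfl|rfl <;> simp
  have hS5C : ({stdVec (3 * k + 1) (3 * 0), stdVec (3 * k + 1) (3 * 0 + 1), stdVec (3 * k + 1) (3 * 0 + 2), (stdVec (3 * k + 1) (3 * 0) - stdVec (3 * k + 1) (3 * 0 + 1)), (stdVec (3 * k + 1) (3 * 0 + 1) - stdVec (3 * k + 1) (3 * 0 + 2))} : Finset (Fin (3 * k + 1) → ℚ)) ⊆ C := by
    intro v hv; apply hS6C
    simp only [Finset.mem_insert, Finset.mem_singleton] at hv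
    rcases hv with rfl|rfl|rfl|rfl|rfl <;> simp
  have hS6C' : ({stdVec (3 * k + 1) (3 * 0), stdVec (3 * k + 1) (3 * 0 + 1), stdVec (3 * k + 1) (3 * 0 + 2), (stdVec (3 * k + 1) (3 * 0) - stdVec (3 * k + 1) (3 * 0 + 1)), (stdVec (3 * k + 1) (3 * 0 + 1) - stdVec (3 * k + 1) (3 * 0 + 2)), (stdVec (3 * k + 1) (3 * 0) - stdVec (3 * k + 1) (3 * 0 + 2))} : Finset (Fin (3 * k + 1) → ℚ)) ⊆ C := fun v hv => hS6C v hv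
  have hC6 : 6 ≤ C.card := by
    calc 6 = ({stdVec (3 * k + 1) (3 * 0), stdVec (3 * k + 1) (3 * 0 + 1), stdVec (3 * k + 1) (3 * 0 + 2), (stdVec (3 * k + 1) (3 * 0) - stdVec (3 * k + 1) (3 * 0 + 1)), (stdVec (3 * k + 1) (3 * 0 + 1) - stdVec (3 * k + 1) (3 * 0 + 2)), (stdVec (3 * k + 1) (3 * 0) - stdVec (3 * k + 1) (3 * 0 + 2))} : Finset (Fin (3 * k + 1) → ℚ)).card := c6.symm
    _ ≤ C.card := Finset.card_le_card hS6C'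
  -- upper bound machinery
  have hkey : ∀ (B S : Finset (Fin (3 * k + 1) → ℚ)),
      Submodule.span ℚ (S : Set (Fin (3 * k + 1) → ℚ)) ≤ Submodule.span ℚ (B : Set (Fin (3 * k + 1) → ℚ)) →
      Module.finrank ℚ (Submodule.span ℚ (S : Set (Fin (3 * k + 1) → ℚ))) ≤ B.card :=
    fun B S h => le_trans (Submodule.finrank_mono h) (finrank_span_finset_le_card B)
  have hub1 : Module.finrank ℚ (Submodule.span ℚ (({stdVec (3 * k + 1) (3 * 0)} : Finset (Fin (3 * k + 1) → ℚ)) : Set (Fin (3 * k + 1) → ℚ))) ≤ 1 := by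
    have := hkey {stdVec (3 * k + 1) (3 * 0)} {stdVec (3 * k + 1) (3 * 0)} le_rfl
    rwa [c1] at this
  have hub2 : Module.finrank ℚ (Submodule.span ℚ (({stdVec (3 * k + 1) (3 * 0), stdVec (3 * k + 1) (3 * 0 + 1)} : Finset (Fin (3 * k + 1) → ℚ)) : Set (Fin (3 * k + 1) → ℚ))) ≤ 2 := by
    have := hkey {stdVec (3 * k + 1) (3 * 0), stdVec (3 * k + 1) (3 * 0 + 1)} {stdVec (3 * k + 1) (3 * 0), stdVec (3 * k + 1) (3 * 0 + 1)} le_rfl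
    rwa [c2] at this
  have hsub3 : Submodule.span ℚ (({stdVec (3 * k + 1) (3 * 0), stdVec (3 * k + 1) (3 * 0 + 1), (stdVec (3 * k + 1) (3 * 0) - stdVec (3 * k + 1) (3 * 0 + 1))} : Finset (Fin (3 * k + 1) → ℚ)) : Set (Fin (3 * k + 1) → ℚ)) ≤
      Submodule.span ℚ (({stdVec (3 * k + 1) (3 * 0), stdVec (3 * k + 1) (3 * 0 + 1)} : Finset (Fin (3 * k + 1) → ℚ)) : Set (Fin (3 * k + 1) → ℚ)) := by
    rw [Submodule.span_le]
    intro v hv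
    simp only [Finset.coe_insert, Finset.coe_singleton, Set.mem_insert_iff,
      Set.mem_singleton_iff] at hv
    rcases hv with rfl | rfl | rfl
    · exact Submodule.subset_span (by simp)
    · exact Submodule.subset_span (by simp)
    · exact sub_mem (Submodule.subset_span (by simp)) (Submodule.subset_span (by simp))
  have hub3 : Module.finrank ℚ (Submodule.span ℚ (({stdVec (3 * k + 1) (3 * 0), stdVec (3 * k + 1) (3 * 0 + 1), (stdVec (3 * k + 1) (3 * 0) - stdVec (3 * k + 1) (3 * 0 + 1))} : Finset (Fin (3 * k + 1) → ℚ)) : Set (Fin (3 * k + 1) → ℚ))) ≤ 2 := by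
    have := hkey {stdVec (3 * k + 1) (3 * 0), stdVec (3 * k + 1) (3 * 0 + 1)} {stdVec (3 * k + 1) (3 * 0), stdVec (3 * k + 1) (3 * 0 + 1), (stdVec (3 * k + 1) (3 * 0) - stdVec (3 * k + 1) (3 * 0 + 1))} hsub3
    rwa [c2] at this
  have hsub6 : ∀ (S : Finset (Fin (3 * k + 1) → ℚ)), S ⊆ ({stdVec (3 * k + 1) (3 * 0), stdVec (3 * k + 1) (3 * 0 + 1), stdVec (3 * k + 1) (3 * 0 + 2), (stdVec (3 * k + 1) (3 * 0) - stdVec (3 * k + 1) (3 * 0 + 1)), (stdVec (3 * k + 1) (3 * 0 + 1) - stdVec (3 * k + 1) (3 * 0 + 2)), (stdVec (3 * k + 1) (3 * 0) - stdVec (3 * k + 1) (3 * 0 + 2))} : Finset (Fin (3 * k + 1) → ℚ)) →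
      Submodule.span ℚ (S : Set (Fin (3 * k + 1) → ℚ)) ≤
      Submodule.span ℚ (({stdVec (3 * k + 1) (3 * 0), stdVec (3 * k + 1) (3 * 0 + 1), stdVec (3 * k + 1) (3 * 0 + 2)} : Finset (Fin (3 * k + 1) → ℚ)) : Set (Fin (3 * k + 1) → ℚ)) := by
    intro S hS
    rw [Submodule.span_le]
    intro v hv
    have hv6 := hS (Finset.mem_coe.mp hv)
    simp only [Finset.mem_insert, Finset.mem_singleton] at hv6
    rcases hv6 with rfl | rfl | rfl | rfl | rfl | rfl
    · exact Submodule.subset_span (by simp)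
    · exact Submodule.subset_span (by simp)
    · exact Submodule.subset_span (by simp)
    · exact sub_mem (Submodule.subset_span (by simp)) (Submodule.subset_span (by simp))
    · exact sub_mem (Submodule.subset_span (by simp)) (Submodule.subset_span (by simp))
    · exact sub_mem (Submodule.subset_span (by simp)) (Submodule.subset_span (by simp))
  have h46 : ({stdVec (3 * k + 1) (3 * 0), stdVec (3 * k + 1) (3 * 0 + 1), stdVec (3 * k + 1) (3 * 0 + 2), (stdVec (3 * k + 1) (3 * 0) - stdVec (3 * k + 1) (3 * 0 + 1))} : Finset (Fin (3 * k + 1) → ℚ)) ⊆ ({stdVec (3 * k + 1) (3 * 0), stdVec (3 * k + 1) (3 * 0 + 1), stdVec (3 * k + 1) (3 * 0 + 2), (stdVec (3 * k + 1) (3 * 0) - stdVec (3 * k + 1) (3 * 0 + 1)), (stdVec (3 * k + 1) (3 * 0 + 1) - stdVec (3 * k + 1) (3 * 0 + 2)), (stdVec (3 * k + 1) (3 * 0) - stdVec (3 * k + 1) (3 * 0 + 2))} : Finset (Fin (3 * k + 1) → ℚ)) := by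
    intro v hv
    simp only [Finset.mem_insert, Finset.mem_singleton] at hv
    rcases hv with rfl|rfl|rfl|rfl <;> simp
  have h56 : ({stdVec (3 * k + 1) (3 * 0), stdVec (3 * k + 1) (3 * 0 + 1), stdVec (3 * k + 1) (3 * 0 + 2), (stdVec (3 * k + 1) (3 * 0) - stdVec (3 * k + 1) (3 * 0 + 1)), (stdVec (3 * k + 1) (3 * 0 + 1) - stdVec (3 * k + 1) (3 * 0 + 2))} : Finset (Fin (3 * k + 1) → ℚ)) ⊆ ({stdVec (3 * k + 1) (3 * 0), stdVec (3 * k + 1) (3 * 0 + 1), stdVec (3 * k + 1) (3 * 0 + 2), (stdVec (3 * k + 1) (3 * 0) - stdVec (3 * k + 1) (3 * 0 + 1)), (stdVec (3 * k + 1) (3 * 0 + 1) - stdVec (3 * k + 1) (3 * 0 + 2)), (stdVec (3 * k + 1) (3 * 0) - stdVec (3 * k + 1) (3 * 0 + 2))} : Finset (Fin (3 * k + 1) → ℚ)) := by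
    intro v hv
    simp only [Finset.mem_insert, Finset.mem_singleton] at hv
    rcases hv with rfl|rfl|rfl|rfl|rfl <;> simp
  have hub4 : Module.finrank ℚ (Submodule.span ℚ (({stdVec (3 * k + 1) (3 * 0), stdVec (3 * k + 1) (3 * 0 + 1), stdVec (3 * k + 1) (3 * 0 + 2), (stdVec (3 * k + 1) (3 * 0) - stdVec (3 * k + 1) (3 * 0 + 1))} : Finset (Fin (3 * k + 1) → ℚ)) : Set (Fin (3 * k + 1) → ℚ))) ≤ 3 := by
    have := hkey {stdVec (3 * k + 1) (3 * 0), stdVec (3 * k + 1) (3 * 0 + 1), stdVec (3 * k + 1) (3 * 0 + 2)} {stdVec (3 * k + 1) (3 * 0), stdVec (3 * k + 1) (3 * 0 + 1), stdVec (3 * k + 1) (3 * 0 + 2), (stdVec (3 * k + 1) (3 * 0) - stdVec (3 * k + 1) (3 * 0 + 1))}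
      (hsub6 _ h46)
    rwa [c3'] at this
  have hub5 : Module.finrank ℚ (Submodule.span ℚ (({stdVec (3 * k + 1) (3 * 0), stdVec (3 * k + 1) (3 * 0 + 1), stdVec (3 * k + 1) (3 * 0 + 2), (stdVec (3 * k + 1) (3 * 0) - stdVec (3 * k + 1) (3 * 0 + 1)), (stdVec (3 * k + 1) (3 * 0 + 1) - stdVec (3 * k + 1) (3 * 0 + 2))} : Finset (Fin (3 * k + 1) → ℚ)) : Set (Fin (3 * k + 1) → ℚ))) ≤ 3 := by
    have := hkey {stdVec (3 * k + 1) (3 * 0), stdVec (3 * k + 1) (3 * 0 + 1), stdVec (3 * k + 1) (3 * 0 + 2)} {stdVec (3 * k + 1) (3 * 0), stdVec (3 * k + 1) (3 * 0 + 1), stdVec (3 * k + 1) (3 * 0 + 2), (stdVec (3 * k + 1) (3 * 0) - stdVec (3 * k + 1) (3 * 0 + 1)), (stdVec (3 * k + 1) (3 * 0 + 1) - stdVec (3 * k + 1) (3 * 0 + 2))}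
      (hsub6 _ h56)
    rwa [c3'] at this
  have hub6 : Module.finrank ℚ (Submodule.span ℚ (({stdVec (3 * k + 1) (3 * 0), stdVec (3 * k + 1) (3 * 0 + 1), stdVec (3 * k + 1) (3 * 0 + 2), (stdVec (3 * k + 1) (3 * 0) - stdVec (3 * k + 1) (3 * 0 + 1)), (stdVec (3 * k + 1) (3 * 0 + 1) - stdVec (3 * k + 1) (3 * 0 + 2)), (stdVec (3 * k + 1) (3 * 0) - stdVec (3 * k + 1) (3 * 0 + 2))} : Finset (Fin (3 * k + 1) → ℚ)) : Set (Fin (3 * k + 1) → ℚ))) ≤ 3 := by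
    have := hkey {stdVec (3 * k + 1) (3 * 0), stdVec (3 * k + 1) (3 * 0 + 1), stdVec (3 * k + 1) (3 * 0 + 2)} {stdVec (3 * k + 1) (3 * 0), stdVec (3 * k + 1) (3 * 0 + 1), stdVec (3 * k + 1) (3 * 0 + 2), (stdVec (3 * k + 1) (3 * 0) - stdVec (3 * k + 1) (3 * 0 + 1)), (stdVec (3 * k + 1) (3 * 0 + 1) - stdVec (3 * k + 1) (3 * 0 + 2)), (stdVec (3 * k + 1) (3 * 0) - stdVec (3 * k + 1) (3 * 0 + 2))} (hsub6 _ (fun v hv => hv))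
    rwa [c3'] at this
  -- lower bound machinery
  have hedge : ∀ c ∈ C, DCaux.IsEdge (DCaux.psi (3 * k + 1) c) := by
    intro c hc
    rw [hC] at hc
    rcases Finset.mem_union.mp hc with hc | hc
    · obtain ⟨β, hβ, hcm⟩ := Finset.mem_biUnion.mp hc
      have hβk : β < k := Finset.mem_range.mp hβ
      simp only [Finset.mem_insert, Finset.mem_singleton] at hcm
      rcases hcm with rfl | rfl | rfl | rfl | rfl | rfl
      · exact ⟨⟨3 * β, by omega⟩, ⟨3 * k + 1, by omega⟩, by simp only [Fin.mk_lt_mk]; omega,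
          DCaux.psi_stdVec (by omega)⟩
      · exact ⟨⟨3 * β + 1, by omega⟩, ⟨3 * k + 1, by omega⟩, by simp only [Fin.mk_lt_mk]; omega,
          DCaux.psi_stdVec (by omega)⟩
      · exact ⟨⟨3 * β + 2, by omega⟩, ⟨3 * k + 1, by omega⟩, by simp only [Fin.mk_lt_mk]; omega,
          DCaux.psi_stdVec (by omega)⟩
      · exact ⟨⟨3 * β, by omega⟩, ⟨3 * β + 1, by omega⟩, by simp only [Fin.mk_lt_mk]; omega,
          DCaux.psi_stdVec_sub (by omega) (by omega)⟩
      · exact ⟨⟨3 * β + 1, by omega⟩, ⟨3 * β + 2, by omega⟩, by simp only [Fin.mk_lt_mk]; omega,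
          DCaux.psi_stdVec_sub (by omega) (by omega)⟩
      · exact ⟨⟨3 * β, by omega⟩, ⟨3 * β + 2, by omega⟩, by simp only [Fin.mk_lt_mk]; omega,
          DCaux.psi_stdVec_sub (by omega) (by omega)⟩
    · rw [Finset.mem_singleton] at hc
      subst hc
      exact ⟨⟨3 * k, by omega⟩, ⟨3 * k + 1, by omega⟩, by simp only [Fin.mk_lt_mk]; omega,
        DCaux.psi_stdVec (by omega)⟩
  have lb1 : ∀ S : Finset (Fin (3 * k + 1) → ℚ), S ⊆ C → 1 ≤ S.card →
      1 ≤ Module.finrank ℚ (Submodule.span ℚ (S : Set (Fin (3 * k + 1) → ℚ))) := by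
    intro S hsub hcard
    rw [← DCaux.finrank_span_image S]
    apply DCaux.edges_finrank_ge_one
    · intro v hv
      obtain ⟨c, hc, rfl⟩ := Finset.mem_image.mp hv
      exact hedge c (hsub hc)
    · rw [Finset.card_image_of_injective _ (DCaux.psi_injective _)]; exact hcard
  have lb2 : ∀ S : Finset (Fin (3 * k + 1) → ℚ), S ⊆ C → 2 ≤ S.card →
      2 ≤ Module.finrank ℚ (Submodule.span ℚ (S : Set (Fin (3 * k + 1) → ℚ))) := by
    intro S hsub hcard
    rw [← DCaux.finrank_span_image S]
    apply DCaux.edges_finrank_ge_two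
    · intro v hv
      obtain ⟨c, hc, rfl⟩ := Finset.mem_image.mp hv
      exact hedge c (hsub hc)
    · rw [Finset.card_image_of_injective _ (DCaux.psi_injective _)]; exact hcard
  have lb3 : ∀ S : Finset (Fin (3 * k + 1) → ℚ), S ⊆ C → 4 ≤ S.card →
      3 ≤ Module.finrank ℚ (Submodule.span ℚ (S : Set (Fin (3 * k + 1) → ℚ))) := by
    intro S hsub hcard
    rw [← DCaux.finrank_span_image S]
    apply DCaux.edges_finrank_ge_three
    · intro v hv
      obtain ⟨c, hc, rfl⟩ := Finset.mem_image.mp hv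
      exact hedge c (hsub hc)
    · rw [Finset.card_image_of_injective _ (DCaux.psi_injective _)]; exact hcard
  refine ⟨?_, ?_, ?_, ?_, ?_, ?_, ?_⟩
  · -- depthChart C 0 = 0
    unfold depthChart
    rw [dif_pos ⟨le_refl 0, by omega⟩]
    simp only [show (0:ℤ).toNat = 0 from rfl]
    simp only [Finset.powersetCard_zero, Finset.inf'_singleton]
    simp [Finset.coe_empty, Submodule.span_empty]
  · -- depthChart C 1 = 1
    unfold depthChart
    rw [dif_pos ⟨by norm_num, by omega⟩]
    simp only [show (1:ℤ).toNat = 1 from rfl]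
    refine le_antisymm ?_ ?_
    · refine le_trans (Finset.inf'_le _ (Finset.mem_powersetCard.mpr ⟨hS1C, c1⟩)) ?_
      exact_mod_cast hub1
    · refine Finset.le_inf' _ _ ?_
      intro S hS
      obtain ⟨hsub, hcard⟩ := Finset.mem_powersetCard.mp hS
      exact_mod_cast lb1 S hsub (by omega)
  · -- depthChart C 2 = 2
    unfold depthChart
    rw [dif_pos ⟨by norm_num, by omega⟩]
    simp only [show (2:ℤ).toNat = 2 from rfl]
    refine le_antisymm ?_ ?_
    · refine le_trans (Finset.inf'_le _ (Finset.mem_powersetCard.mpr ⟨hS2C, c2⟩)) ?_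
      exact_mod_cast hub2
    · refine Finset.le_inf' _ _ ?_
      intro S hS
      obtain ⟨hsub, hcard⟩ := Finset.mem_powersetCard.mp hS
      exact_mod_cast lb2 S hsub (by omega)
  · -- depthChart C 3 = 2
    unfold depthChart
    rw [dif_pos ⟨by norm_num, by omega⟩]
    simp only [show (3:ℤ).toNat = 3 from rfl]
    refine le_antisymm ?_ ?_
    · refine le_trans (Finset.inf'_le _ (Finset.mem_powersetCard.mpr ⟨hS3C, c3⟩)) ?_
      exact_mod_cast hub3
    · refine Finset.le_inf' _ _ ?_
      intro S hS
      obtain ⟨hsub, hcard⟩ := Finset.mem_powersetCard.mp hS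
      exact_mod_cast lb2 S hsub (by omega)
  · -- depthChart C 4 = 3
    unfold depthChart
    rw [dif_pos ⟨by norm_num, by omega⟩]
    simp only [show (4:ℤ).toNat = 4 from rfl]
    refine le_antisymm ?_ ?_
    · refine le_trans (Finset.inf'_le _ (Finset.mem_powersetCard.mpr ⟨hS4C, c4⟩)) ?_
      exact_mod_cast hub4
    · refine Finset.le_inf' _ _ ?_
      intro S hS
      obtain ⟨hsub, hcard⟩ := Finset.mem_powersetCard.mp hS
      exact_mod_cast lb3 S hsub (by omega)
  · -- depthChart C 5 = 3
    unfold depthChart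
    rw [dif_pos ⟨by norm_num, by omega⟩]
    simp only [show (5:ℤ).toNat = 5 from rfl]
    refine le_antisymm ?_ ?_
    · refine le_trans (Finset.inf'_le _ (Finset.mem_powersetCard.mpr ⟨hS5C, c5⟩)) ?_
      exact_mod_cast hub5
    · refine Finset.le_inf' _ _ ?_
      intro S hS
      obtain ⟨hsub, hcard⟩ := Finset.mem_powersetCard.mp hS
      exact_mod_cast lb3 S hsub (by omega)
  · -- depthChart C 6 = 3
    unfold depthChart
    rw [dif_pos ⟨by norm_num, by omega⟩]
    simp only [show (6:ℤ).toNat = 6 from rfl]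
    refine le_antisymm ?_ ?_
    · refine le_trans (Finset.inf'_le _ (Finset.mem_powersetCard.mpr ⟨hS6C', c6⟩)) ?_
      exact_mod_cast hub6
    · refine Finset.le_inf' _ _ ?_
      intro S hS
      obtain ⟨hsub, hcard⟩ := Finset.mem_powersetCard.mp hS
      exact_mod_cast lb3 S hsub (by omega)
end
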